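/- arXiv:2203.03907 — 2 statements merged into one kernel-verified Lean document; each statement's English description precedes it below -/
import Mathlib

section
/- Let F be a k-dimensional face of the integer hull P_I = conv(P ∩ Z^n). Then for every integer point x ∈ F ∩ Z^n, the number of indices i ∈ {1,…,m} whose slack is large, i.e. |{i : b_i − (A x)_i ≥ Δ}|, is at most m − n + k. -/
/-!
Let `T` be the set of rows with slack `< Δ` at `x`. Choose `n` linearly independent rows
`A_{f 1}, …, A_{f n}` such that the rows of `T` are spanned by those `A_{f j}` with `f j ∈ T`.
For each of the at least `n - |T|` indices `j` with `f j ∉ T`, the `j`-th column `d_j` of the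
adjugate of `A_f` is integral, orthogonal to every row of `T`, and satisfies `|A_i ⬝ d_j| ≤ Δ`
because `A_i ⬝ d_j` is an `n × n` subdeterminant of `A` (Cramer's rule). Hence `x ± d_j` are
integer points of `P`, so `x` is the midpoint of two points of `P_I` and `d_j` lies in the
direction of `F`. The `d_j` are linearly independent, so `n - |T| ≤ k`.
-/

open Matrix Set

/-- The real matrix obtained from an integer matrix by casting entries. -/
noncomputable def matR {m n : ℕ} (A : Matrix (Fin m) (Fin n) ℤ) :
    Matrix (Fin m) (Fin n) ℝ := A.map (fun a => (a : ℝ))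

/-- The polyhedron `P = {x ∈ ℝⁿ : A x ≤ b}`. -/
def poly {m n : ℕ} (A : Matrix (Fin m) (Fin n) ℤ) (b : Fin m → ℤ) :
    Set (Fin n → ℝ) := {x | ∀ i, (matR A).mulVec x i ≤ (b i : ℝ)}

/-- The set of integer points of `ℝⁿ`. -/
def intPts {n : ℕ} : Set (Fin n → ℝ) := {x | ∀ j, ∃ z : ℤ, x j = (z : ℝ)}

/-- The integer hull `P_I = conv(P ∩ ℤⁿ)`. -/
noncomputable def intHull {m n : ℕ} (A : Matrix (Fin m) (Fin n) ℤ) (b : Fin m → ℤ) :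
    Set (Fin n → ℝ) := convexHull ℝ (poly A b ∩ intPts)

/-- `Δ(A)`: the maximum absolute value of determinants of all `n × n` submatrices of `A`. -/
def maxAbsSubdet {m n : ℕ} (A : Matrix (Fin m) (Fin n) ℤ) : ℕ :=
  Finset.univ.sup fun f : Fin n → Fin m => ((A.submatrix f id).det).natAbs

/-- The rank (over `ℝ`) of the submatrix of `A` formed by the rows indexed by `J`. -/
noncomputable def rowsRank {m n : ℕ} (A : Matrix (Fin m) (Fin n) ℤ) (J : Finset (Fin m)) : ℕ :=
  ((matR A).submatrix (fun i : {i // i ∈ J} => (i : Fin m)) id).rank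

theorem card_le_card_filter_notMem_add_card {ι α : Type*} [Fintype ι] [DecidableEq α]
    {f : ι → α} (hf : Function.Injective f) (T : Finset α) :
    Fintype.card ι ≤ (Finset.univ.filter fun j => f j ∉ T).card + T.card := by
  have hmem : (Finset.univ.filter fun j => f j ∈ T).card ≤ T.card :=
    Finset.card_le_card_of_injOn f (fun j hj => by simpa using hj) hf.injOn
  have hsplit := Finset.card_filter_add_card_filter_not (s := Finset.univ) (fun j => f j ∉ T)
  simp only [Finset.card_univ, not_not] at hsplit
  omega

section LinearAlgebra

variable {K V : Type*} [Field K] [AddCommGroup V] [Module K V]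

theorem exists_linearIndependent_fin_adapted {ι : Type*} [Finite ι] {n : ℕ} (v : ι → V)
    (hv : Submodule.span K (range v) = ⊤) (hn : Module.finrank K V = n) (T : Set ι) :
    ∃ f : Fin n → ι, LinearIndependent K (v ∘ f) ∧
      ∀ i ∈ T, v i ∈ Submodule.span K ((v ∘ f) '' {j | f j ∈ T}) := by
  obtain ⟨I, hIT, -, hTI, hI⟩ := exists_linearIndepOn_extension (linearIndepOn_empty K v)
    (empty_subset T)
  obtain ⟨B, -, hIB, hB, hBli⟩ := exists_linearIndepOn_extension hI (subset_univ I)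
  have : Fintype B := Fintype.ofFinite B
  have hBspan : Submodule.span K (range fun b : B => v b) = ⊤ := by
    rw [eq_top_iff, ← hv, ← image_univ, ← image_eq_range]
    exact Submodule.span_le.mpr hB
  have hcard : Fintype.card B = n := by
    rw [← finrank_span_eq_card hBli, hBspan, finrank_top, hn]
  set e := Fintype.equivFinOfCardEq hcard
  refine ⟨Subtype.val ∘ e.symm, hBli.comp _ e.symm.injective, fun i hi => ?_⟩
  refine Submodule.span_mono ?_ (hTI ⟨i, hi, rfl⟩)
  rintro _ ⟨x, hx, rfl⟩
  exact ⟨e ⟨x, hIB hx⟩, by simpa using hIT hx, by simp⟩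

theorem LinearIndependent.card_le_finrank_of_forall_mem {ι : Type*} [Fintype ι] {v : ι → V}
    (hv : LinearIndependent K v) {S : Submodule K V} [Module.Finite K S] (hS : ∀ i, v i ∈ S) :
    Fintype.card ι ≤ Module.finrank K S :=
  (LinearIndependent.of_comp S.subtype (v := fun i => ⟨v i, hS i⟩)
    (by exact hv)).fintype_card_le_finrank

end LinearAlgebra

theorem span_row_eq_top_of_rank_eq {K m : Type*} [Field K] [Finite m] {n : ℕ}
    (M : Matrix m (Fin n) K) (h : M.rank = n) : Submodule.span K (range M.row) = ⊤ :=
  Submodule.eq_top_of_finrank_eq (by rw [← rank_eq_finrank_span_row, h, Module.finrank_fin_fun])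

section Adjugate

variable {R ι : Type*} [CommRing R] [Fintype ι]

theorem dotProduct_eq_zero_of_mem_span {s : Set (ι → R)} {c w : ι → R}
    (hs : ∀ u ∈ s, u ⬝ᵥ c = 0) (hw : w ∈ Submodule.span R s) : w ⬝ᵥ c = 0 := by
  have : Submodule.span R s ≤ LinearMap.ker ((dotProductBilin R R).flip c) :=
    Submodule.span_le.mpr hs
  simpa using this hw

variable [DecidableEq ι]

theorem dotProduct_adjugate_transpose (N : Matrix ι ι R) (a : ι → R) (j : ι) :
    a ⬝ᵥ N.adjugateᵀ j = (N.updateRow j a).det := by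
  rw [← det_transpose, ← updateCol_transpose, ← cramer_apply, cramer_eq_adjugate_mulVec,
    ← adjugate_transpose, dotProduct_comm]
  rfl

theorem row_dotProduct_adjugate_transpose (N : Matrix ι ι R) (i j : ι) :
    N i ⬝ᵥ N.adjugateᵀ j = if i = j then N.det else 0 := by
  have := congrFun (congrFun (mul_adjugate N) i) j
  rw [mul_apply'] at this
  rw [show N.adjugateᵀ j = fun k => N.adjugate k j from rfl, this]
  simp [one_apply]

end Adjugate

theorem IsExtreme.mem_direction_of_add_mem_of_sub_mem {𝕜 E : Type*} [Field 𝕜] [LinearOrder 𝕜]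
    [IsStrictOrderedRing 𝕜] [AddCommGroup E] [Module 𝕜 E] {C F : Set E} (hF : IsExtreme 𝕜 C F)
    {x d : E} (hx : x ∈ F) (hadd : x + d ∈ C) (hsub : x - d ∈ C) :
    d ∈ (affineSpan 𝕜 F).direction := by
  have hmid : x ∈ openSegment 𝕜 (x + d) (x - d) :=
    ⟨1 / 2, 1 / 2, by norm_num, by norm_num, by norm_num, by module⟩
  have hxd : x + d ∈ F := hF.2 hadd hsub hx hmid
  simpa using AffineSubspace.vsub_mem_direction (subset_affineSpan 𝕜 F hxd)
    (subset_affineSpan 𝕜 F hx)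

section IntegerMatrix

variable {m n : ℕ}

theorem matR_mulVec_intCast (A : Matrix (Fin m) (Fin n) ℤ) (x : Fin n → ℤ) (i : Fin m) :
    (matR A *ᵥ fun j => (x j : ℝ)) i = (A *ᵥ x) i := by
  simp [matR, Matrix.mulVec, dotProduct]

theorem matR_dotProduct_intCast (A : Matrix (Fin m) (Fin n) ℤ) (d : Fin n → ℤ) (i : Fin m) :
    matR A i ⬝ᵥ (fun j => (d j : ℝ)) = A i ⬝ᵥ d := by
  simp [matR, dotProduct]

theorem det_ne_zero_of_linearIndependent_matR_row {N : Matrix (Fin n) (Fin n) ℤ}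
    (h : LinearIndependent ℝ (matR N).row) : N.det ≠ 0 := by
  have hdet : IsUnit (matR N).det :=
    (isUnit_iff_isUnit_det _).1 (linearIndependent_rows_iff_isUnit.1 h)
  rw [show matR N = (Int.castRingHom ℝ).mapMatrix N from rfl, ← RingHom.map_det,
    isUnit_iff_ne_zero] at hdet
  simpa using hdet

theorem linearIndependent_matR_adjugate_transpose_row {N : Matrix (Fin n) (Fin n) ℤ}
    (h : N.det ≠ 0) : LinearIndependent ℝ (matR N.adjugateᵀ).row := by
  rw [show matR N.adjugateᵀ = ((Int.castRingHom ℝ).mapMatrix N).adjugateᵀ by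
    rw [← RingHom.map_adjugate]; rfl]
  refine linearIndependent_rows_iff_isUnit.2 ((isUnit_iff_isUnit_det _).2 ?_)
  rw [det_transpose, det_adjugate, ← RingHom.map_det]
  exact (isUnit_iff_ne_zero.2 (by simpa using h)).pow _

theorem natAbs_det_submatrix_le_maxAbsSubdet (A : Matrix (Fin m) (Fin n) ℤ) (f : Fin n → Fin m) :
    (A.submatrix f id).det.natAbs ≤ maxAbsSubdet A :=
  Finset.le_sup (f := fun f : Fin n → Fin m => (A.submatrix f id).det.natAbs) (Finset.mem_univ f)

theorem natAbs_dotProduct_adjugate_transpose_le (A : Matrix (Fin m) (Fin n) ℤ)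
    (f : Fin n → Fin m) (i : Fin m) (j : Fin n) :
    (A i ⬝ᵥ (A.submatrix f id).adjugateᵀ j).natAbs ≤ maxAbsSubdet A := by
  have : (A.submatrix f id).updateRow j (A i) = A.submatrix (Function.update f j i) id := by
    ext j' l
    by_cases h : j' = j <;> simp [updateRow_apply, Function.update, h]
  rw [dotProduct_adjugate_transpose, this]
  exact natAbs_det_submatrix_le_maxAbsSubdet A _

theorem dotProduct_adjugate_transpose_eq_zero_of_mem_span (A : Matrix (Fin m) (Fin n) ℤ)
    (f : Fin n → Fin m) {S : Set (Fin n)} {j : Fin n} (hj : j ∉ S) {i : Fin m}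
    (hi : (matR A).row i ∈ Submodule.span ℝ (((matR A).row ∘ f) '' S)) :
    A i ⬝ᵥ (A.submatrix f id).adjugateᵀ j = 0 := by
  have hℝ := dotProduct_eq_zero_of_mem_span (c := fun l => ((A.submatrix f id).adjugateᵀ j l : ℝ))
    ?_ hi
  · rw [row, matR_dotProduct_intCast] at hℝ
    exact_mod_cast hℝ
  rintro _ ⟨j', hj', rfl⟩
  have hne : j' ≠ j := ne_of_mem_of_not_mem hj' hj
  rw [Function.comp_apply, row, matR_dotProduct_intCast,
    show A (f j') = A.submatrix f id j' from rfl, row_dotProduct_adjugate_transpose, if_neg hne,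
    Int.cast_zero]

end IntegerMatrix

section Polyhedron

variable {m n : ℕ} {A : Matrix (Fin m) (Fin n) ℤ} {b : Fin m → ℤ}

theorem convex_poly : Convex ℝ (poly A b) := by
  have : poly A b = ⋂ i, {x | (LinearMap.proj i ∘ₗ (matR A).mulVecLin) x ≤ (b i : ℝ)} := by
    ext x
    simp [poly]
  rw [this]
  exact convex_iInter fun i => convex_halfSpace_le (LinearMap.isLinear _) _

theorem intHull_subset_poly : intHull A b ⊆ poly A b :=
  convexHull_min inter_subset_left convex_poly

theorem intCast_mem_poly_iff {x : Fin n → ℤ} :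
    (fun j => (x j : ℝ)) ∈ poly A b ↔ ∀ i, (A *ᵥ x) i ≤ b i := by
  simp only [poly, mem_ofPred_eq, matR_mulVec_intCast, Int.cast_le]

variable {F : Set (Fin n → ℝ)} {x : Fin n → ℤ}

theorem intCast_mem_direction_of_abs_dotProduct_le_slack (hF : IsExtreme ℝ (intHull A b) F)
    (hx : (fun j => (x j : ℝ)) ∈ F) {d : Fin n → ℤ} (hd : ∀ i, |A i ⬝ᵥ d| ≤ b i - (A *ᵥ x) i) :
    (fun j => (d j : ℝ)) ∈ (affineSpan ℝ F).direction := by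
  have hmem : ∀ y : Fin n → ℤ, (∀ i, (A *ᵥ y) i ≤ b i) → (fun j => (y j : ℝ)) ∈ intHull A b :=
    fun y hy => subset_convexHull ℝ _ ⟨intCast_mem_poly_iff.2 hy, fun j => ⟨y j, rfl⟩⟩
  refine hF.mem_direction_of_add_mem_of_sub_mem hx ?_ ?_
  · convert hmem (x + d) fun i => ?_ using 1
    · ext j; simp
    · have := (abs_le.1 (hd i)).2
      rw [mulVec_add, Pi.add_apply, show (A *ᵥ d) i = A i ⬝ᵥ d from rfl]
      linarith
  · convert hmem (x - d) fun i => ?_ using 1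
    · ext j; simp
    · have := (abs_le.1 (hd i)).1
      rw [mulVec_sub, Pi.sub_apply, show (A *ᵥ d) i = A i ⬝ᵥ d from rfl]
      linarith

theorem matR_adjugate_transpose_row_mem_direction (hF : IsExtreme ℝ (intHull A b) F)
    (hx : (fun j => (x j : ℝ)) ∈ F) (f : Fin n → Fin m) {S : Set (Fin n)} {j : Fin n}
    (hj : j ∉ S) (hspan : ∀ i, b i - (A *ᵥ x) i < maxAbsSubdet A →
      (matR A).row i ∈ Submodule.span ℝ (((matR A).row ∘ f) '' S)) :
    (matR (A.submatrix f id).adjugateᵀ).row j ∈ (affineSpan ℝ F).direction := by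
  have hxP := intCast_mem_poly_iff.1 (intHull_subset_poly (hF.1 hx))
  refine intCast_mem_direction_of_abs_dotProduct_le_slack hF hx fun i => ?_
  by_cases hi : b i - (A *ᵥ x) i < maxAbsSubdet A
  · rw [dotProduct_adjugate_transpose_eq_zero_of_mem_span A f hj (hspan i hi), abs_zero]
    exact sub_nonneg.2 (hxP i)
  · have hbound : |A i ⬝ᵥ (A.submatrix f id).adjugateᵀ j| ≤ maxAbsSubdet A := by
      rw [Int.abs_eq_natAbs]
      exact_mod_cast natAbs_dotProduct_adjugate_transpose_le A f i j
    exact hbound.trans (not_lt.1 hi)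

end Polyhedron

theorem face_large_slack_count_general {m n k : ℕ}
    (A : Matrix (Fin m) (Fin n) ℤ) (b : Fin m → ℤ) (Δ : ℕ)
    (hΔ : maxAbsSubdet A = Δ)
    (hrank : (matR A).rank = n)
    (F : Set (Fin n → ℝ)) (hF : IsExtreme ℝ (intHull A b) F)
    (hFdim : Module.finrank ℝ (affineSpan ℝ F).direction = k) :
    ∀ x : Fin n → ℤ, (fun j => (x j : ℝ)) ∈ F →
      (Finset.univ.filter fun i : Fin m => (Δ : ℤ) ≤ b i - A.mulVec x i).card ≤ m - n + k := by
  subst hΔ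
  intro x hxF
  set T := Finset.univ.filter fun i : Fin m => b i - A.mulVec x i < maxAbsSubdet A
  obtain ⟨f, hf, hTspan⟩ := exists_linearIndependent_fin_adapted (matR A).row
    (span_row_eq_top_of_rank_eq _ hrank) (Module.finrank_fin_fun ℝ) (T : Set (Fin m))
  set J := Finset.univ.filter fun j => f j ∉ T
  have hJ : J.card ≤ k := by
    have hli : LinearIndependent ℝ fun j : J => (matR (A.submatrix f id).adjugateᵀ).row j :=
      (linearIndependent_matR_adjugate_transpose_row
        (det_ne_zero_of_linearIndependent_matR_row hf)).comp _ Subtype.val_injective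
    rw [← hFdim, ← Fintype.card_coe]
    exact hli.card_le_finrank_of_forall_mem fun j =>
      matR_adjugate_transpose_row_mem_direction hF hxF f (S := {j | f j ∈ T})
        (Finset.mem_filter.1 j.2).2 fun i hi => hTspan i (by simpa [T] using hi)
  have hTJ : n ≤ J.card + T.card := by
    simpa using card_le_card_filter_notMem_add_card hf.injective.of_comp T
  have hsplit : (Finset.univ.filter fun i : Fin m =>
      (maxAbsSubdet A : ℤ) ≤ b i - A.mulVec x i).card + T.card = m := by
    simpa [T] using Finset.card_filter_add_card_filter_not (s := Finset.univ)
      (fun i : Fin m => (maxAbsSubdet A : ℤ) ≤ b i - A.mulVec x i)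
  omega

/-- If `F` is a `k`-dimensional face of the integer hull `P_I = conv(P ∩ ℤⁿ)`, then for every
integer point `x ∈ F ∩ ℤⁿ` the number of indices `i` with slack `b_i - (A x)_i ≥ Δ` is at most
`m - n + k`. -/
theorem face_large_slack_count {m n k : ℕ}
    (A : Matrix (Fin m) (Fin n) ℤ) (b : Fin m → ℤ) (Δ : ℕ)
    (hΔ : maxAbsSubdet A = Δ) (hΔ1 : 1 ≤ Δ)
    (hrank : (matR A).rank = n)
    (hfull : affineSpan ℝ (poly A b) = ⊤)
    (F : Set (Fin n → ℝ)) (hF : IsExtreme ℝ (intHull A b) F)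
    (hFconv : Convex ℝ F) (hFne : F.Nonempty)
    (hFdim : Module.finrank ℝ (affineSpan ℝ F).direction = k) :
    ∀ x : Fin n → ℤ, (fun j => (x j : ℝ)) ∈ F →
      (Finset.univ.filter fun i : Fin m => (Δ : ℤ) ≤ b i - A.mulVec x i).card ≤ m - n + k :=
  face_large_slack_count_general A b Δ hΔ hrank F hF hFdim
end

section
/- Let B ⊆ {1,…,m} be a set of indices with |B| = n and det(A_B) ≠ 0, and let V_B = {v ∈ vertex(P_I) : for every i ∈ B, 0 ≤ b_i − (A v)_i ≤ Δ − 1} be the set of vertices of the integer hull whose B-slacks are all smaller than Δ. Then |V_B| ≤ γ(n, Δ). -/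
/-!
The slack map `v ↦ b_B - A_B v` is affine and, since `det A_B ≠ 0`, injective. Vertices of `P_I`
are integer points, so it sends `V_B` into the grid `{0, …, Δ-1}ⁿ`; and vertices of the convex set
`P_I` are convex-independent, a property that injective affine maps preserve. Hence the image of
`V_B` is a convex-independent subset of the grid with `|V_B|` points.
-/

open Matrix Set

/-- A `Δ`-deep base of the system `A x ≤ b`. -/
def DeepBase {m n : ℕ} (A : Matrix (Fin m) (Fin n) ℤ) (b : Fin m → ℤ) (Δ : ℕ)
    (B : Finset (Fin m)) : Prop :=
  ∃ h : B.card = n,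
    (A.submatrix (fun j : Fin n => ((B.orderIsoOfFin h j : {x // x ∈ B}) : Fin m)) id).det ≠ 0 ∧
    ∃ x : Fin n → ℝ,
      (∀ i ∈ B, (b i : ℝ) - ((Δ : ℝ) - 1) ≤ (matR A).mulVec x i) ∧
      (∀ i : Fin m, (matR A).mulVec x i ≤ (b i : ℝ))

/-- A set is convex-independent if none of its points lies in the convex hull of the others. -/
def ConvexIndependentSet {n : ℕ} (M : Set (Fin n → ℝ)) : Prop :=
  ∀ x ∈ M, x ∉ convexHull ℝ (M \ {x})

/-- The grid `{0, 1, …, Δ-1}ⁿ` inside `ℝⁿ`. -/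
def grid (n Δ : ℕ) : Set (Fin n → ℝ) := {x | ∀ j, ∃ z : ℕ, z < Δ ∧ x j = (z : ℝ)}

/-- `γ(n, Δ)`: the maximum cardinality of a convex-independent subset of `{0,…,Δ-1}ⁿ`. -/
noncomputable def gamma (n Δ : ℕ) : ℕ :=
  sSup {c : ℕ | ∃ M : Finset (Fin n → ℝ), M.card = c ∧
    (M : Set (Fin n → ℝ)) ⊆ grid n Δ ∧ ConvexIndependentSet (M : Set (Fin n → ℝ))}

open Function

lemma grid_finite (n Δ : ℕ) : (grid n Δ).Finite := by
  refine (Set.Finite.pi fun _ : Fin n => (Set.finite_Iio Δ).image (fun z : ℕ => (z : ℝ))).subset ?_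
  intro x hx j _
  obtain ⟨z, hz, hxz⟩ := hx j
  exact ⟨z, hz, hxz.symm⟩

lemma mem_grid_of_mem_intPts {n Δ : ℕ} {x : Fin n → ℝ} (hx : x ∈ intPts)
    (hbounds : ∀ j, 0 ≤ x j ∧ x j ≤ (Δ : ℝ) - 1) : x ∈ grid n Δ := by
  intro j
  obtain ⟨z, hz⟩ := hx j
  obtain ⟨h0, h1⟩ := hbounds j
  rw [hz] at h0 h1 ⊢
  have h0' : 0 ≤ z := by exact_mod_cast h0
  have h1' : z < Δ := by
    have : (z : ℝ) < Δ := by linarith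
    exact_mod_cast this
  exact ⟨z.toNat, by omega, by exact_mod_cast (Int.toNat_of_nonneg h0').symm⟩

lemma ncard_le_gamma {n Δ : ℕ} {S : Set (Fin n → ℝ)} (hS : S ⊆ grid n Δ)
    (hind : ConvexIndependentSet S) : S.ncard ≤ gamma n Δ := by
  have hfin : S.Finite := (grid_finite n Δ).subset hS
  refine le_csSup ⟨(grid n Δ).ncard, ?_⟩ ⟨hfin.toFinset, ?_, ?_, ?_⟩
  · rintro k ⟨N, rfl, hN, -⟩
    rw [← Set.ncard_coe_finset]
    exact Set.ncard_le_ncard hN (grid_finite n Δ)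
  · rw [Set.ncard_eq_toFinset_card _ hfin]
  · rwa [hfin.coe_toFinset]
  · rwa [hfin.coe_toFinset]

lemma ConvexIndependentSet.mono {n : ℕ} {M N : Set (Fin n → ℝ)} (hM : ConvexIndependentSet M)
    (hNM : N ⊆ M) : ConvexIndependentSet N :=
  fun x hx hmem => hM x (hNM hx) (convexHull_mono (Set.sdiff_subset_sdiff_left hNM) hmem)

lemma convexIndependentSet_extremePoints {n : ℕ} {s : Set (Fin n → ℝ)} (hs : Convex ℝ s) :
    ConvexIndependentSet (Set.extremePoints ℝ s) :=
  convexIndependent_set_iff_notMem_convexHull_sdiff.1 hs.convexIndependent_extremePoints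

lemma ConvexIndependentSet.image {n k : ℕ} {M : Set (Fin n → ℝ)} (hM : ConvexIndependentSet M)
    {φ : (Fin n → ℝ) →ᵃ[ℝ] (Fin k → ℝ)} (hφ : Injective φ) : ConvexIndependentSet (φ '' M) := by
  rintro _ ⟨x, hx, rfl⟩ hmem
  rw [← Set.image_singleton, ← Set.image_sdiff hφ, ← φ.image_convexHull] at hmem
  obtain ⟨y, hy, hyx⟩ := hmem
  exact hM x hx (hφ hyx ▸ hy)

lemma extremePoints_intHull_subset {m n : ℕ} (A : Matrix (Fin m) (Fin n) ℤ) (b : Fin m → ℤ) :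
    Set.extremePoints ℝ (intHull A b) ⊆ poly A b ∩ intPts :=
  extremePoints_convexHull_subset

noncomputable def slackMap {k n : ℕ} (A : Matrix (Fin k) (Fin n) ℤ) (b : Fin k → ℤ) :
    (Fin n → ℝ) →ᵃ[ℝ] (Fin k → ℝ) :=
  AffineMap.const ℝ _ (fun i => (b i : ℝ)) - (matR A).mulVecLin.toAffineMap

lemma slackMap_apply {k n : ℕ} (A : Matrix (Fin k) (Fin n) ℤ) (b : Fin k → ℤ) (v : Fin n → ℝ)
    (i : Fin k) : slackMap A b v i = b i - (matR A *ᵥ v) i := rfl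

lemma matR_det {n : ℕ} (A : Matrix (Fin n) (Fin n) ℤ) : (matR A).det = A.det :=
  ((Int.castRingHom ℝ).map_det A).symm

lemma slackMap_injective {n : ℕ} {A : Matrix (Fin n) (Fin n) ℤ} (hA : A.det ≠ 0) (b : Fin n → ℤ) :
    Injective (slackMap A b) := by
  have hunit : IsUnit (matR A) := by
    rw [Matrix.isUnit_iff_isUnit_det, matR_det, isUnit_iff_ne_zero]
    exact_mod_cast hA
  intro v w h
  exact Matrix.mulVec_injective_iff_isUnit.2 hunit (sub_right_injective h)

lemma slackMap_mem_intPts {k n : ℕ} (A : Matrix (Fin k) (Fin n) ℤ) (b : Fin k → ℤ)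
    {v : Fin n → ℝ} (hv : v ∈ intPts) : slackMap A b v ∈ intPts := by
  choose z hz using hv
  intro i
  refine ⟨b i - (A *ᵥ z) i, ?_⟩
  obtain rfl : v = (↑) ∘ z := funext hz
  simp [slackMap_apply, matR, Matrix.mulVec, dotProduct]

theorem card_vertices_small_B_slacks_le_gamma_general {m n : ℕ}
    (A : Matrix (Fin m) (Fin n) ℤ) (b : Fin m → ℤ) (Δ : ℕ)
    (B : Finset (Fin m)) (hB : B.card = n)
    (hdet : (A.submatrix (fun j : Fin n => ((B.orderIsoOfFin hB j : {x // x ∈ B}) : Fin m))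
      id).det ≠ 0) :
    {v ∈ Set.extremePoints ℝ (intHull A b) |
        ∀ i ∈ B, 0 ≤ (b i : ℝ) - (matR A).mulVec v i ∧
          (b i : ℝ) - (matR A).mulVec v i ≤ (Δ : ℝ) - 1}.ncard ≤ gamma n Δ := by
  set f : Fin n → Fin m := fun j => B.orderIsoOfFin hB j
  set σ := slackMap (A.submatrix f id) (b ∘ f)
  have hσ : Injective σ := slackMap_injective hdet _
  rw [← Set.ncard_image_of_injective _ hσ]
  refine ncard_le_gamma ?_
    (((convexIndependentSet_extremePoints (convex_convexHull ℝ _)).mono fun _ hv => hv.1).image hσ)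
  rintro _ ⟨v, ⟨hext, hslack⟩, rfl⟩
  exact mem_grid_of_mem_intPts (slackMap_mem_intPts _ _ (extremePoints_intHull_subset A b hext).2)
    fun j => hslack (f j) (B.orderIsoOfFin hB j).2

/-- For a set `B` of `n` row indices with `det(A_B) ≠ 0`, the set `V_B` of vertices of the
integer hull whose `B`-slacks are all at most `Δ - 1` has cardinality at most `γ(n, Δ)`. -/
theorem card_vertices_small_B_slacks_le_gamma {m n : ℕ}
    (A : Matrix (Fin m) (Fin n) ℤ) (b : Fin m → ℤ) (Δ : ℕ)
    (hΔ : maxAbsSubdet A = Δ) (hΔ1 : 1 ≤ Δ)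
    (hrank : (matR A).rank = n)
    (hfull : affineSpan ℝ (poly A b) = ⊤)
    (B : Finset (Fin m)) (hB : B.card = n)
    (hdet : (A.submatrix (fun j : Fin n => ((B.orderIsoOfFin hB j : {x // x ∈ B}) : Fin m))
      id).det ≠ 0) :
    {v ∈ Set.extremePoints ℝ (intHull A b) |
        ∀ i ∈ B, 0 ≤ (b i : ℝ) - (matR A).mulVec v i ∧
          (b i : ℝ) - (matR A).mulVec v i ≤ (Δ : ℝ) - 1}.ncard ≤ gamma n Δ :=
  card_vertices_small_B_slacks_le_gamma_general A b Δ B hB hdet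
end
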